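/- The product representation ψ(q) = f_2^2 / f_1 holds, i.e., in ℤ[[q]] one has ψ(q)·f_1 = f_2^2, where ψ(q) = ∑_{n≥0} q^{n(n+1)/2} and f_m = ∏_{n≥1}(1 - q^{mn}). -/

import Mathlib

open PowerSeries
open scoped Classical

/-- `f m = ∏_{n ≥ 1} (1 - q^{m n})` in `ℤ[[q]]`, defined coefficientwise via the
stabilizing partial products (factors with `k > n` do not affect the coefficient of `q^n`). -/
noncomputable def f (m : ℕ) : PowerSeries ℤ :=
  PowerSeries.mk fun n =>
    PowerSeries.coeff (R := ℤ) n (∏ k ∈ Finset.Icc 1 n, (1 - (PowerSeries.X : PowerSeries ℤ) ^ (m * k)))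

/-- Ramanujan's theta function `φ(q) = ∑_{n ∈ ℤ} q^{n^2} = 1 + 2 ∑_{n ≥ 1} q^{n^2}`. -/
noncomputable def phi : PowerSeries ℤ :=
  PowerSeries.mk fun n => if n = 0 then 1 else if IsSquare n then 2 else 0

/-- Ramanujan's theta function `ψ(q) = ∑_{n ≥ 0} q^{n(n+1)/2}`. -/
noncomputable def psi : PowerSeries ℤ :=
  PowerSeries.mk fun n => if ∃ k, k * (k + 1) = 2 * n then 1 else 0

/-- Substitution `q ↦ q^j` on formal power series. -/
noncomputable def substPow (j : ℕ) (F : PowerSeries ℤ) : PowerSeries ℤ :=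
  PowerSeries.mk fun n => if j ∣ n then PowerSeries.coeff (R := ℤ) (n / j) F else 0

/-- `F(-q)`. -/
noncomputable def neg_q (F : PowerSeries ℤ) : PowerSeries ℤ :=
  PowerSeries.rescale (-1 : ℤ) F

/-- `bt n` : the number of overcubic partition triples of `n`, via the generating
function `∑ bt(n) q^n = f_4^3 / (f_1^6 f_2^3)`. -/
noncomputable def bt (n : ℕ) : ℤ :=
  PowerSeries.coeff (R := ℤ) n (f 4 ^ 3 * Ring.inverse (f 1) ^ 6 * Ring.inverse (f 2) ^ 3)

/-!
Cauchy's finite form of the Jacobi triple product, specialised at `z = 1`, reads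
`(-q;q)_a (-1;q)_b = ∑_{i=0}^{a+b} [a+b, i]_q q^{T(i-b)}` with `T(k) = k(k+1)/2`; by the two
q-Pascal rules both sides gain the factor `1 + q^(a+1)` (resp. `1 + q^b`) when `a` (resp. `b`)
grows by one. From `[n, i]_q (q;q)_i (q;q)_(n-i) = (q;q)_n`, and since all `(q;q)_j` with `j ≥ m`
agree and are units modulo `q^(m+1)`, we get `[n, i]_q (q;q)_n ≡ 1` modulo
`q^(min(i, n-i)+1)`. Taking `a = M`, `b = M + 1` and multiplying by `(q;q)_(2M+1)` then gives
`2 ψ(q) ≡ 2 (-q;q)_M^2 (q;q)_(2M+1)` modulo `q^(M+1)`. As `(q;q)_M (-q;q)_M = (q²;q²)_M`, this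
says `2 ψ f_1 ≡ 2 f_2^2` modulo `q^(M+1)` for every `M`, and the factor `2` cancels in `ℤ`.
-/

open Finset

section QSeries

variable {R : Type*} [CommRing R]

lemma smodEq_span_singleton_iff {r x y : R} : x ≡ y [SMOD Ideal.span {r}] ↔ r ∣ x - y := by
  rw [SModEq.sub_mem, Ideal.mem_span_singleton]

def qPochhammer (a q : R) (n : ℕ) : R := ∏ j ∈ range n, (1 - a * q ^ j)

@[simp]
lemma qPochhammer_zero (a q : R) : qPochhammer a q 0 = 1 := prod_range_zero _

lemma qPochhammer_succ (a q : R) (n : ℕ) :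
    qPochhammer a q (n + 1) = qPochhammer a q n * (1 - a * q ^ n) :=
  prod_range_succ _ _

lemma qPochhammer_mul_qPochhammer_neg (a q : R) (n : ℕ) :
    qPochhammer a q n * qPochhammer (-a) q n = qPochhammer (a ^ 2) (q ^ 2) n := by
  simp only [qPochhammer, ← prod_mul_distrib]
  exact prod_congr rfl fun j _ ↦ by ring

lemma qPochhammer_neg_one_succ (q : R) (n : ℕ) :
    qPochhammer (-1) q (n + 1) = 2 * qPochhammer (-q) q n := by
  rw [qPochhammer, prod_range_succ', qPochhammer, mul_comm]
  congr 1
  · norm_num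
  · exact prod_congr rfl fun j _ ↦ by ring

lemma qPochhammer_smodEq (a q : R) {m n : ℕ} (h : m ≤ n) :
    qPochhammer a q n ≡ qPochhammer a q m [SMOD Ideal.span {a * q ^ m}] := by
  induction n, h using Nat.le_induction with
  | base => rfl
  | succ n hmn ih =>
    have hvanish : a * q ^ n ≡ 0 [SMOD Ideal.span {a * q ^ m}] :=
      smodEq_span_singleton_iff.2 <| by simpa using mul_dvd_mul_left a (pow_dvd_pow q hmn)
    calc qPochhammer a q (n + 1) = qPochhammer a q n * (1 - a * q ^ n) := qPochhammer_succ ..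
      _ ≡ qPochhammer a q m * (1 - 0) [SMOD Ideal.span {a * q ^ m}] := by gcongr
      _ = qPochhammer a q m := by ring

lemma qPochhammer_self_smodEq (q : R) {m n : ℕ} (h : m ≤ n) :
    qPochhammer q q n ≡ qPochhammer q q m [SMOD Ideal.span {q ^ (m + 1)}] := by
  simpa only [← pow_succ'] using qPochhammer_smodEq q q h

-- `n - k` truncates only for `k > n`, where `gaussBinom q n k = 0`.
def gaussBinom (q : R) : ℕ → ℕ → R
  | _, 0 => 1
  | 0, _ + 1 => 0
  | n + 1, k + 1 => gaussBinom q n (k + 1) + q ^ (n - k) * gaussBinom q n k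

@[simp]
lemma gaussBinom_zero_right (q : R) (n : ℕ) : gaussBinom q n 0 = 1 := by
  cases n <;> rfl

lemma gaussBinom_succ_succ (q : R) (n k : ℕ) :
    gaussBinom q (n + 1) (k + 1) = gaussBinom q n (k + 1) + q ^ (n - k) * gaussBinom q n k :=
  rfl

lemma gaussBinom_eq_zero_of_lt (q : R) : ∀ {n k : ℕ}, n < k → gaussBinom q n k = 0
  | 0, _ + 1, _ => rfl
  | n + 1, k + 1, h => by
    rw [gaussBinom_succ_succ, gaussBinom_eq_zero_of_lt q (by omega),
      gaussBinom_eq_zero_of_lt q (show n < k by omega), mul_zero, add_zero]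

@[simp]
lemma gaussBinom_self (q : R) : ∀ n : ℕ, gaussBinom q n n = 1
  | 0 => rfl
  | n + 1 => by
    rw [gaussBinom_succ_succ, gaussBinom_eq_zero_of_lt q (Nat.lt_succ_self n), gaussBinom_self q n,
      Nat.sub_self, pow_zero, mul_one, zero_add]

lemma gaussBinom_mul_qPochhammer_mul_qPochhammer (q : R) :
    ∀ {n k : ℕ}, k ≤ n →
      gaussBinom q n k * qPochhammer q q k * qPochhammer q q (n - k) = qPochhammer q q n
  | _, 0, _ => by simp
  | n + 1, k + 1, h => by
    obtain rfl | hk := eq_or_lt_of_le (Nat.le_of_succ_le_succ h)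
    · simp
    obtain ⟨d, rfl⟩ := Nat.exists_eq_add_of_lt hk
    have ih₁ := gaussBinom_mul_qPochhammer_mul_qPochhammer q (show k + 1 ≤ k + d + 1 by omega)
    have ih₀ := gaussBinom_mul_qPochhammer_mul_qPochhammer q (show k ≤ k + d + 1 by omega)
    rw [show k + d + 1 - (k + 1) = d by omega, qPochhammer_succ q q k] at ih₁
    rw [show k + d + 1 - k = d + 1 by omega, qPochhammer_succ q q d] at ih₀
    rw [show k + d + 1 + 1 - (k + 1) = d + 1 by omega, gaussBinom_succ_succ,
      show k + d + 1 - k = d + 1 by omega, qPochhammer_succ q q k, qPochhammer_succ q q d,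
      qPochhammer_succ q q (k + d + 1)]
    linear_combination (1 - q * q ^ d) * ih₁ + q ^ (d + 1) * (1 - q * q ^ k) * ih₀

lemma one_sub_pow_mul_gaussBinom_succ (q : R) :
    ∀ n k : ℕ, (1 - q ^ (k + 1)) * gaussBinom q n (k + 1) = (1 - q ^ (n - k)) * gaussBinom q n k
  | 0, k => by simp [gaussBinom]
  | n + 1, 0 => by
    have ih := one_sub_pow_mul_gaussBinom_succ q n 0
    simp only [gaussBinom_succ_succ, gaussBinom_zero_right, Nat.sub_zero] at ih ⊢
    linear_combination ih
  | n + 1, k + 1 => by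
    rcases lt_or_ge k n with hk | hk
    · obtain ⟨d, rfl⟩ := Nat.exists_eq_add_of_lt hk
      have ih₁ := one_sub_pow_mul_gaussBinom_succ q (k + d + 1) (k + 1)
      have ih₀ := one_sub_pow_mul_gaussBinom_succ q (k + d + 1) k
      rw [show k + d + 1 - (k + 1) = d by omega] at ih₁
      rw [show k + d + 1 - k = d + 1 by omega] at ih₀
      rw [gaussBinom_succ_succ q (k + d + 1) (k + 1), gaussBinom_succ_succ q (k + d + 1) k,
        show k + d + 1 - (k + 1) = d by omega,
        show k + d + 1 + 1 - (k + 1) = d + 1 by omega, show k + d + 1 - k = d + 1 by omega]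
      linear_combination ih₁ + q ^ (d + 1) * ih₀
    · rw [gaussBinom_eq_zero_of_lt q (show n + 1 < k + 1 + 1 by omega),
        show n + 1 - (k + 1) = 0 by omega]
      ring

lemma gaussBinom_succ_succ' (q : R) (n k : ℕ) :
    gaussBinom q (n + 1) (k + 1) = q ^ (k + 1) * gaussBinom q n (k + 1) + gaussBinom q n k := by
  rw [gaussBinom_succ_succ]
  linear_combination one_sub_pow_mul_gaussBinom_succ q n k

lemma gaussBinom_mul_qPochhammer_smodEq_one (q : R) {n k : ℕ} (h : k ≤ n) :
    gaussBinom q n k * qPochhammer q q n ≡ 1 [SMOD Ideal.span {q ^ (min k (n - k) + 1)}] := by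
  set m := min k (n - k)
  set π := Ideal.Quotient.mk (Ideal.span {q ^ (m + 1)})
  have hstable {j : ℕ} (hj : m ≤ j) : π (qPochhammer q q j) = π (qPochhammer q q m) :=
    qPochhammer_self_smodEq q hj
  have hunit : IsUnit (π (qPochhammer q q m)) := by
    have hnil : IsNilpotent (π q) :=
      ⟨m + 1, by
        rw [← map_pow, Ideal.Quotient.eq_zero_iff_mem]
        exact Ideal.mem_span_singleton_self _⟩
    rw [qPochhammer, map_prod]
    exact prod_induction _ IsUnit (fun _ _ ↦ IsUnit.mul) isUnit_one fun j _ ↦ by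
      simpa using ((Commute.all _ _).isNilpotent_mul_right hnil).isUnit_one_sub
  have hprod := congrArg π (gaussBinom_mul_qPochhammer_mul_qPochhammer q h)
  simp only [map_mul, hstable (min_le_left k (n - k)), hstable (min_le_right k (n - k)),
    hstable (show m ≤ n by omega)] at hprod
  change π (gaussBinom q n k * qPochhammer q q n) = π 1
  rw [map_mul, map_one, hstable (show m ≤ n by omega)]
  exact (hunit.mul_left_inj).1 (by linear_combination hprod)

def triangle (k : ℤ) : ℕ := (k * (k + 1) / 2).toNat

lemma two_mul_triangle (k : ℤ) : 2 * (triangle k : ℤ) = k * (k + 1) := by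
  have hnonneg : 0 ≤ k * (k + 1) := by
    rcases le_or_gt 0 k with hk | hk <;> nlinarith
  rw [triangle, Int.toNat_of_nonneg (Int.ediv_nonneg hnonneg (by norm_num)),
    Int.mul_ediv_cancel' (Int.even_mul_succ_self k).two_dvd]

lemma triangle_add_one (k : ℤ) : (triangle (k + 1) : ℤ) = triangle k + k + 1 := by
  linarith [two_mul_triangle k, two_mul_triangle (k + 1)]

lemma triangle_neg_sub_one (k : ℤ) : triangle (-k - 1) = triangle k := by
  have h : 2 * (triangle (-k - 1) : ℤ) = 2 * triangle k := by
    rw [two_mul_triangle, two_mul_triangle]; ring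
  exact_mod_cast mul_left_cancel₀ two_ne_zero h

lemma le_triangle (k : ℤ) : k ≤ triangle k := by
  have := two_mul_triangle k
  rcases le_or_gt k 0 with hk | hk
  · omega
  · nlinarith

lemma triangle_natCast_injective : Function.Injective fun n : ℕ ↦ triangle n := by
  intro j k h
  have hj := two_mul_triangle j
  have hk := two_mul_triangle k
  simp only at h
  rw [h] at hj
  rcases lt_trichotomy j k with hjk | rfl | hjk
  · have : (j : ℤ) < k := by exact_mod_cast hjk
    nlinarith
  · rfl
  · have : (k : ℤ) < j := by exact_mod_cast hjk
    nlinarith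

lemma sum_range_gaussBinom_succ_mul (q : R) (n : ℕ) (g : ℕ → R) :
    ∑ i ∈ range (n + 2), gaussBinom q (n + 1) i * g i =
      ∑ i ∈ range (n + 1), gaussBinom q n i * g i +
        ∑ i ∈ range (n + 1), q ^ (n - i) * gaussBinom q n i * g (i + 1) := by
  have hshift := sum_range_succ' (fun i ↦ gaussBinom q n i * g i) (n + 1)
  rw [sum_range_succ, gaussBinom_eq_zero_of_lt q (Nat.lt_succ_self n), zero_mul,
    add_zero] at hshift
  rw [sum_range_succ', hshift]
  simp only [gaussBinom_succ_succ, gaussBinom_zero_right, add_mul, sum_add_distrib]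
  ring

lemma sum_range_gaussBinom_succ_mul' (q : R) (n : ℕ) (g : ℕ → R) :
    ∑ i ∈ range (n + 2), gaussBinom q (n + 1) i * g i =
      ∑ i ∈ range (n + 1), q ^ i * gaussBinom q n i * g i +
        ∑ i ∈ range (n + 1), gaussBinom q n i * g (i + 1) := by
  have hshift := sum_range_succ' (fun i ↦ q ^ i * gaussBinom q n i * g i) (n + 1)
  rw [sum_range_succ, gaussBinom_eq_zero_of_lt q (Nat.lt_succ_self n), mul_zero, zero_mul,
    add_zero] at hshift
  rw [sum_range_succ', hshift]
  simp only [gaussBinom_succ_succ', gaussBinom_zero_right, add_mul, sum_add_distrib]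
  ring

lemma sum_gaussBinom_mul_pow_triangle_succ_left (q : R) (a b : ℕ) :
    ∑ i ∈ range (a + b + 2), gaussBinom q (a + b + 1) i * q ^ triangle (i - b) =
      (1 + q ^ (a + 1)) *
        ∑ i ∈ range (a + b + 1), gaussBinom q (a + b) i * q ^ triangle (i - b) := by
  rw [sum_range_gaussBinom_succ_mul, add_mul, one_mul, mul_sum]
  congr 1
  refine sum_congr rfl fun i hi ↦ ?_
  have hexp : a + b - i + triangle (↑(i + 1) - b) = a + 1 + triangle (i - b) := by
    have := triangle_add_one (i - b)
    rw [mem_range] at hi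
    rw [show ((i + 1 : ℕ) : ℤ) - b = i - b + 1 by push_cast; ring]
    omega
  have hpow :
      q ^ (a + b - i) * q ^ triangle (↑(i + 1) - b) = q ^ (a + 1) * q ^ triangle (i - b) := by
    rw [← pow_add, ← pow_add, hexp]
  linear_combination gaussBinom q (a + b) i * hpow

lemma sum_gaussBinom_mul_pow_triangle_succ_right (q : R) (n b : ℕ) :
    ∑ i ∈ range (n + 2), gaussBinom q (n + 1) i * q ^ triangle (i - (b + 1)) =
      (1 + q ^ b) * ∑ i ∈ range (n + 1), gaussBinom q n i * q ^ triangle (i - b) := by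
  rw [sum_range_gaussBinom_succ_mul', add_mul, one_mul, mul_sum, add_comm]
  congr 1
  · refine sum_congr rfl fun i _ ↦ ?_
    rw [show ((i + 1 : ℕ) : ℤ) - (b + 1) = i - b by push_cast; ring]
  · refine sum_congr rfl fun i _ ↦ ?_
    have hexp : i + triangle (i - (b + 1)) = b + triangle (i - b) := by
      have := triangle_add_one (i - (b + 1))
      rw [show (i : ℤ) - (b + 1) + 1 = i - b by ring] at this
      omega
    have hpow : q ^ i * q ^ triangle (i - (b + 1)) = q ^ b * q ^ triangle (i - b) := by
      rw [← pow_add, ← pow_add, hexp]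
    linear_combination gaussBinom q n i * hpow

theorem qPochhammer_neg_mul_qPochhammer_neg_one (q : R) (a b : ℕ) :
    qPochhammer (-q) q a * qPochhammer (-1) q b =
      ∑ i ∈ range (a + b + 1), gaussBinom q (a + b) i * q ^ triangle (i - b) := by
  induction b with
  | zero =>
    induction a with
    | zero => simp [triangle]
    | succ a ih =>
      have hstep := sum_gaussBinom_mul_pow_triangle_succ_left q a 0
      simp only [add_zero, Nat.cast_zero, qPochhammer_zero, mul_one] at ih hstep ⊢
      rw [hstep, ← ih, qPochhammer_succ]
      ring
  | succ b ih =>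
    rw [qPochhammer_succ (-1), ← mul_assoc, ih, show a + (b + 1) = a + b + 1 by ring,
      Nat.cast_succ, sum_gaussBinom_mul_pow_triangle_succ_right]
    ring

lemma sum_range_pow_triangle_sub (q : R) (M : ℕ) :
    ∑ i ∈ range (2 * M + 2), q ^ triangle (i - (M + 1)) =
      2 * ∑ j ∈ range (M + 1), q ^ triangle j := by
  rw [show 2 * M + 2 = (M + 1) + (M + 1) by ring, sum_range_add, two_mul, ← sum_range_reflect]
  congr 1 <;> refine sum_congr rfl fun j hj ↦ ?_
  · rw [mem_range] at hj
    rw [← triangle_neg_sub_one j]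
    congr 2
    rw [Nat.add_sub_cancel]
    push_cast [show j ≤ M by omega]
    ring
  · congr 2
    push_cast
    ring

lemma sum_gaussBinom_mul_pow_triangle_mul_qPochhammer_smodEq (q : R) (M : ℕ) :
    (∑ i ∈ range (2 * M + 2), gaussBinom q (2 * M + 1) i * q ^ triangle (i - (M + 1))) *
        qPochhammer q q (2 * M + 1) ≡
      ∑ i ∈ range (2 * M + 2), q ^ triangle (i - (M + 1)) [SMOD Ideal.span {q ^ (M + 1)}] := by
  rw [sum_mul]
  refine SModEq.sum fun i hi ↦ ?_
  rw [mem_range] at hi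
  have hcong := gaussBinom_mul_qPochhammer_smodEq_one q (show i ≤ 2 * M + 1 by omega)
  rw [smodEq_span_singleton_iff] at hcong ⊢
  have hbound : M + 1 ≤ min i (2 * M + 1 - i) + 1 + triangle (i - (M + 1)) := by
    have := le_triangle (i - (M + 1))
    have := le_triangle (-(i - (M + 1)) - 1)
    rw [triangle_neg_sub_one] at this
    omega
  calc q ^ (M + 1) ∣ q ^ (min i (2 * M + 1 - i) + 1) * q ^ triangle (i - (M + 1)) := by
        rw [← pow_add]; exact pow_dvd_pow q hbound
    _ ∣ _ := by
        convert mul_dvd_mul_right hcong (q ^ triangle (i - (M + 1))) using 1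
        ring

theorem two_mul_sum_pow_triangle_smodEq (q : R) (M : ℕ) :
    2 * ∑ j ∈ range (M + 1), q ^ triangle j ≡
      2 * qPochhammer (-q) q M ^ 2 * qPochhammer q q (2 * M + 1)
        [SMOD Ideal.span {q ^ (M + 1)}] := by
  have hfinite := qPochhammer_neg_mul_qPochhammer_neg_one q M (M + 1)
  rw [qPochhammer_neg_one_succ, show M + (M + 1) = 2 * M + 1 by ring, Nat.cast_succ,
    mul_left_comm, ← sq] at hfinite
  rw [← sum_range_pow_triangle_sub, hfinite]
  exact (sum_gaussBinom_mul_pow_triangle_mul_qPochhammer_smodEq q M).symm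

lemma smodEq_X_pow_iff {A B : R⟦X⟧} {c : ℕ} :
    A ≡ B [SMOD Ideal.span {X ^ c}] ↔ ∀ i < c, coeff i A = coeff i B := by
  simp only [smodEq_span_singleton_iff, X_pow_dvd_iff, map_sub, sub_eq_zero]

end QSeries

lemma psi_smodEq (M : ℕ) :
    psi ≡ ∑ j ∈ range M, X ^ triangle j [SMOD Ideal.span {X ^ M}] := by
  rw [smodEq_X_pow_iff]
  intro i hi
  have htri (k : ℕ) : k * (k + 1) = 2 * i ↔ i = triangle k := by
    have := two_mul_triangle k
    constructor <;> intro h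
    · zify at h; omega
    · zify; omega
  simp only [psi, coeff_mk, map_sum, coeff_X_pow, htri]
  split_ifs with hex
  · obtain ⟨k, hk⟩ := hex
    have hkM : k < M := by have := le_triangle k; omega
    rw [sum_eq_single_of_mem k (mem_range.2 hkM) fun j _ hjk ↦ if_neg fun hj ↦
      hjk (triangle_natCast_injective (hj.symm.trans hk)), if_pos hk]
  · exact (sum_eq_zero fun j _ ↦ if_neg fun hj ↦ hex ⟨j, hj⟩).symm

lemma f_smodEq {m : ℕ} (hm : 0 < m) (M : ℕ) :
    f m ≡ qPochhammer (X ^ m) (X ^ m) M [SMOD Ideal.span {X ^ (M + 1)}] := by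
  rw [smodEq_X_pow_iff]
  intro i hi
  have hprod :
      ∏ k ∈ Icc 1 i, (1 - (X : ℤ⟦X⟧) ^ (m * k)) = qPochhammer (X ^ m) (X ^ m) i := by
    rw [← Ico_add_one_right_eq_Icc, prod_Ico_eq_prod_range, qPochhammer, Nat.add_sub_cancel]
    exact prod_congr rfl fun j _ ↦ by ring
  have htrunc := qPochhammer_smodEq (X ^ m : ℤ⟦X⟧) (X ^ m) (show i ≤ M by omega)
  rw [← pow_mul, ← pow_add, smodEq_X_pow_iff] at htrunc
  rw [f, coeff_mk, hprod, htrunc i (by nlinarith)]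

theorem stmt7 : psi * f 1 = f 2 ^ 2 := by
  ext n
  have hf₁ := f_smodEq one_pos n
  have hf₂ := f_smodEq two_pos n
  simp only [pow_one] at hf₁
  set I := Ideal.span {(X : ℤ⟦X⟧) ^ (n + 1)}
  have hP : qPochhammer X X (2 * n + 1) ≡ qPochhammer (X : ℤ⟦X⟧) X n [SMOD I] :=
    qPochhammer_self_smodEq X (by omega)
  have htwice : 2 * (psi * f 1) ≡ 2 * f 2 ^ 2 [SMOD I] :=
    calc 2 * (psi * f 1) = 2 * psi * f 1 := by ring
      _ ≡ 2 * (∑ j ∈ range (n + 1), X ^ triangle j) * qPochhammer X X n [SMOD I] :=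
        (SModEq.rfl.mul (psi_smodEq (n + 1))).mul hf₁
      _ ≡ 2 * qPochhammer (-X) X n ^ 2 * qPochhammer X X (2 * n + 1) * qPochhammer X X n
          [SMOD I] :=
        (two_mul_sum_pow_triangle_smodEq X n).mul SModEq.rfl
      _ ≡ 2 * qPochhammer (-X) X n ^ 2 * qPochhammer X X n * qPochhammer X X n [SMOD I] :=
        (SModEq.rfl.mul hP).mul SModEq.rfl
      _ = 2 * qPochhammer (X ^ 2) (X ^ 2) n ^ 2 := by
        rw [← qPochhammer_mul_qPochhammer_neg]; ring
      _ ≡ 2 * f 2 ^ 2 [SMOD I] := SModEq.rfl.mul (hf₂.symm.pow 2)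
  have hcoeff := smodEq_X_pow_iff.1 htwice n (Nat.lt_succ_self n)
  rw [← map_ofNat C 2, coeff_C_mul, coeff_C_mul] at hcoeff
  exact mul_left_cancel₀ two_ne_zero hcoeff
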